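/- Let (r_n) be the Baker sequence (C = 1/(4e), r_1 > 4e, r_{n+1} = C r_n² ∏_{i=1}^n (1 + r_n/r_i)) and let z satisfy 4 r_n < |z| < r_{n+1}/4. Writing r = |z|, the sums S₁ = ∑_{k=1}^{n-1} log((1 + r_k/r)/(1 - r_k/r)) and S₂ = ∑_{k=n+2}^∞ log((1 + r/r_k)/(1 - r/r_k)) satisfy S₁ < 3r_{n-1}/(2 r_n) and S₂ < 3 r_{n+1}/(2 r_{n+2}). -/

import Mathlib

/-!
From `r₁ > 4e = 1/C` and `r_{k+1} ≥ 2 C r_k²` one gets `C r_k > 1`, hence `r_{k+1} > 2 r_k`, for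
all `k ≥ 1`. Every term of both sums has the form `log ((1 + x) / (1 - x))` with `0 < x < 1/2`, which
is less than `3x`. In `S₁` the ratios `r_k / r` add up to less than `2 r_{n-1} / r`; in `S₂` the
ratios `r / r_{n+2+j}` are dominated by the geometric series `(r / r_{n+2}) 2^{-j}`, whose sum is
`2 r / r_{n+2}`. The bounds `4 r_n < r < r_{n+1} / 4` turn these into the stated estimates.
-/

open Finset

lemma log_one_add_div_one_sub_nonneg {x : ℝ} (h0 : 0 ≤ x) (h1 : x < 1) :
    0 ≤ Real.log ((1 + x) / (1 - x)) :=
  Real.log_nonneg <| (one_le_div (by linarith)).2 (by linarith)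

lemma log_one_add_div_one_sub_lt_three_mul {x : ℝ} (h0 : 0 < x) (h2 : x < 1 / 2) :
    Real.log ((1 + x) / (1 - x)) < 3 * x := by
  have hsub : 0 < 1 - x := by linarith
  have hadd : Real.log (1 + x) < x := by
    linarith [Real.log_lt_sub_one_of_pos (by linarith : 0 < 1 + x) (by linarith)]
  have hinv : (1 - x)⁻¹ ≤ 1 + 2 * x := by
    rw [inv_le_iff_one_le_mul₀ hsub]
    nlinarith
  have hneg : -Real.log (1 - x) ≤ 2 * x := by
    linarith [Real.one_sub_inv_le_log_of_pos hsub]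
  rw [Real.log_div (by linarith) hsub.ne']
  linarith

lemma tsum_log_one_add_div_one_sub_le {x : ℕ → ℝ} {c : ℝ} (hx0 : ∀ j, 0 < x j)
    (hx : ∀ j, x j ≤ c * (1 / 2) ^ j) (hc : c < 1 / 2) :
    ∑' j, Real.log ((1 + x j) / (1 - x j)) ≤ 6 * c := by
  have hc0 : 0 < c := by simpa using (hx0 0).trans_le (hx 0)
  have hx2 : ∀ j, x j < 1 / 2 := fun j => (hx j).trans_lt <|
    (mul_le_of_le_one_right hc0.le (pow_le_one₀ (by norm_num) (by norm_num))).trans_lt hc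
  have hterm : ∀ j, Real.log ((1 + x j) / (1 - x j)) ≤ 3 * c * (1 / 2) ^ j := fun j => by
    linarith [log_one_add_div_one_sub_lt_three_mul (hx0 j) (hx2 j), hx j]
  have hgeom : HasSum (fun j : ℕ => 3 * c * (1 / 2 : ℝ) ^ j) (6 * c) := by
    have := hasSum_geometric_two.mul_left (3 * c)
    rwa [show 3 * c * 2 = 6 * c by ring] at this
  have hsummable : Summable fun j => Real.log ((1 + x j) / (1 - x j)) :=
    hgeom.summable.of_nonneg_of_le
      (fun j => log_one_add_div_one_sub_nonneg (hx0 j).le (by linarith [hx2 j])) hterm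
  calc ∑' j, Real.log ((1 + x j) / (1 - x j))
      ≤ ∑' j : ℕ, 3 * c * (1 / 2 : ℝ) ^ j := hsummable.tsum_le_tsum hterm hgeom.summable
    _ = 6 * c := hgeom.tsum_eq

section Doubling

variable {r : ℕ → ℝ} {a : ℕ}

lemma two_pow_mul_le_of_two_mul_le (hr : ∀ k, a ≤ k → 2 * r k ≤ r (k + 1)) {k : ℕ}
    (hk : a ≤ k) (j : ℕ) : 2 ^ j * r k ≤ r (k + j) := by
  induction j with
  | zero => simp
  | succ j ih =>
    calc 2 ^ (j + 1) * r k = 2 * (2 ^ j * r k) := by ring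
      _ ≤ 2 * r (k + j) := by linarith
      _ ≤ r (k + j + 1) := hr (k + j) (by omega)

lemma monotoneOn_of_two_mul_le (hpos : ∀ k, a ≤ k → 0 < r k)
    (hr : ∀ k, a ≤ k → 2 * r k ≤ r (k + 1)) : MonotoneOn r (Set.Ici a) :=
  monotoneOn_of_le_add_one Set.ordConnected_Ici fun k _ hk _ => by
    linarith [hpos k hk, hr k hk]

lemma sum_Icc_le_two_mul_sub_of_two_mul_le (hr : ∀ k, a ≤ k → 2 * r k ≤ r (k + 1)) {m : ℕ}
    (hm : a ≤ m) : ∑ k ∈ Icc a m, r k ≤ 2 * r m - r a := by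
  induction m, hm using Nat.le_induction with
  | base =>
    rw [Icc_self, sum_singleton]
    linarith
  | succ m hm ih =>
    rw [sum_Icc_succ_top (by omega)]
    linarith [hr m hm]

lemma two_mul_lt_succ_of_two_mul_sq_le {C : ℝ} (hC : 0 < C) (ha : 1 < C * r a)
    (hstep : ∀ k, a ≤ k → 2 * C * r k ^ 2 ≤ r (k + 1)) : ∀ k, a ≤ k → 2 * r k < r (k + 1) := by
  have hlarge : ∀ k, a ≤ k → 1 < C * r k := by
    intro k hk
    induction k, hk using Nat.le_induction with
    | base => exact ha
    | succ k hk ih =>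
      have := mul_le_mul_of_nonneg_left (hstep k hk) hC.le
      nlinarith
  intro k hk
  have hrk : 0 < r k := pos_of_mul_pos_right (one_pos.trans (hlarge k hk)) hC.le
  nlinarith [hlarge k hk, hstep k hk]

lemma sum_log_lt_of_two_mul_le (hpos : ∀ k, a ≤ k → 0 < r k)
    (hr : ∀ k, a ≤ k → 2 * r k ≤ r (k + 1)) {m : ℕ} (hm : a ≤ m) {R : ℝ} (hR : 2 * r m < R) :
    ∑ k ∈ Icc a m, Real.log ((1 + r k / R) / (1 - r k / R)) < 6 * r m / R := by
  have hR0 : 0 < R := by linarith [hpos m hm]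
  have hterm : ∀ k ∈ Icc a m, Real.log ((1 + r k / R) / (1 - r k / R)) < 3 * r k / R := by
    intro k hk
    obtain ⟨hak, hkm⟩ := mem_Icc.mp hk
    have hle : r k ≤ r m := monotoneOn_of_two_mul_le hpos hr hak (Set.mem_Ici.2 hm) hkm
    rw [mul_div_assoc]
    refine log_one_add_div_one_sub_lt_three_mul (div_pos (hpos k hak) hR0) ?_
    rw [div_lt_iff₀ hR0]
    linarith
  calc ∑ k ∈ Icc a m, Real.log ((1 + r k / R) / (1 - r k / R))
      < ∑ k ∈ Icc a m, 3 * r k / R := sum_lt_sum_of_nonempty ⟨a, mem_Icc.2 ⟨le_rfl, hm⟩⟩ hterm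
    _ = 3 * (∑ k ∈ Icc a m, r k) / R := by rw [mul_sum, sum_div]
    _ < 6 * r m / R := by
      rw [div_lt_div_iff_of_pos_right hR0]
      linarith [sum_Icc_le_two_mul_sub_of_two_mul_le hr hm, hpos a le_rfl]

lemma tsum_log_le_of_two_mul_le (hpos : ∀ k, a ≤ k → 0 < r k)
    (hr : ∀ k, a ≤ k → 2 * r k ≤ r (k + 1)) {R : ℝ} (hR0 : 0 < R) (hR : 2 * R < r a) :
    ∑' j, Real.log ((1 + R / r (a + j)) / (1 - R / r (a + j))) ≤ 6 * R / r a := by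
  have hra := hpos a le_rfl
  rw [mul_div_assoc]
  refine tsum_log_one_add_div_one_sub_le (fun j => div_pos hR0 (hpos _ (by omega))) (fun j => ?_)
    (by rw [div_lt_iff₀ hra]; linarith)
  calc R / r (a + j) ≤ R / (2 ^ j * r a) :=
        div_le_div_of_nonneg_left hR0.le (by positivity) (two_pow_mul_le_of_two_mul_le hr le_rfl j)
    _ = R / r a * (1 / 2) ^ j := by rw [one_div, inv_pow, ← div_eq_mul_inv, div_div, mul_comm]

end Doubling

lemma two_le_prod_one_add_div {ι : Type*} {s : Finset ι} {r : ι → ℝ} (hpos : ∀ i ∈ s, 0 < r i)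
    {m : ι} (hm : m ∈ s) : 2 ≤ ∏ i ∈ s, (1 + r m / r i) := by
  calc (2 : ℝ) = ∏ i ∈ {m}, (1 + r m / r i) := by
        rw [prod_singleton, div_self (hpos m hm).ne']; norm_num
    _ ≤ ∏ i ∈ s, (1 + r m / r i) :=
        prod_le_prod_of_subset_of_one_le (singleton_subset_iff.2 hm)
          (fun i hi => by rw [mem_singleton.1 hi, div_self (hpos m hm).ne']; norm_num)
          (fun i hi _ => by linarith [div_pos (hpos m hm) (hpos i hi)])

lemma baker_two_mul_sq_le {C : ℝ} {r : ℕ → ℝ} (hC : 0 ≤ C) (hpos : ∀ k, 1 ≤ k → 0 < r k)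
    (hr2 : r 2 = 2 * C * r 1 ^ 2)
    (hrec : ∀ k, 2 ≤ k → r (k + 1) = C * r k ^ 2 * ∏ i ∈ Icc 1 k, (1 + r k / r i)) :
    ∀ k, 1 ≤ k → 2 * C * r k ^ 2 ≤ r (k + 1) := by
  intro k hk
  rcases hk.eq_or_lt with rfl | hk
  · exact hr2.ge
  have hprod : 2 ≤ ∏ i ∈ Icc 1 k, (1 + r k / r i) :=
    two_le_prod_one_add_div (fun i hi => hpos i (mem_Icc.1 hi).1) (right_mem_Icc.2 hk.le)
  rw [hrec k hk]
  nlinarith [mul_nonneg hC (sq_nonneg (r k))]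

lemma baker_two_mul_lt_succ {C : ℝ} {r : ℕ → ℝ} (hC : C = 1 / (4 * Real.exp 1))
    (hpos : ∀ k, 1 ≤ k → 0 < r k) (hr1 : r 1 > 4 * Real.exp 1) (hr2 : r 2 = 2 * C * r 1 ^ 2)
    (hrec : ∀ k, 2 ≤ k → r (k + 1) = C * r k ^ 2 * ∏ i ∈ Icc 1 k, (1 + r k / r i)) :
    ∀ k, 1 ≤ k → 2 * r k < r (k + 1) := by
  have hC0 : 0 < C := by rw [hC]; positivity
  refine two_mul_lt_succ_of_two_mul_sq_le hC0 ?_ (baker_two_mul_sq_le hC0.le hpos hr2 hrec)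
  rw [hC, one_div_mul_eq_div, one_lt_div (by positivity)]
  exact hr1

theorem baker_log_sum_estimates (C : ℝ) (r : ℕ → ℝ) (n : ℕ) (z : ℂ)
    (hC : C = 1 / (4 * Real.exp 1))
    (hpos : ∀ k, 1 ≤ k → 0 < r k)
    (hr1 : r 1 > 4 * Real.exp 1)
    (hr2 : r 2 = 2 * C * r 1 ^ 2)
    (hrec : ∀ k, 2 ≤ k → r (k + 1) = C * r k ^ 2 * ∏ i ∈ Finset.Icc 1 k, (1 + r k / r i))
    (hn : 2 ≤ n)
    (hz1 : 4 * r n < ‖z‖) (hz2 : ‖z‖ < r (n + 1) / 4) :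
    (∑ k ∈ Finset.Icc 1 (n - 1),
        Real.log ((1 + r k / ‖z‖) / (1 - r k / ‖z‖)))
      < 3 * r (n - 1) / (2 * r n) ∧
    (∑' k : ℕ,
        Real.log ((1 + ‖z‖ / r (n + 2 + k)) / (1 - ‖z‖ / r (n + 2 + k))))
      < 3 * r (n + 1) / (2 * r (n + 2)) := by
  have hdouble := baker_two_mul_lt_succ hC hpos hr1 hr2 hrec
  have hdouble_le : ∀ k, 1 ≤ k → 2 * r k ≤ r (k + 1) := fun k hk => (hdouble k hk).le
  have hrn := hpos n (by omega)
  have hrn2 := hpos (n + 2) (by omega)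
  have hz0 : 0 < ‖z‖ := by linarith
  have hprev : 2 * r (n - 1) < r n := by
    simpa [Nat.sub_add_cancel (by omega : 1 ≤ n)] using hdouble (n - 1) (by omega)
  have hnext : 2 * r (n + 1) < r (n + 2) := hdouble (n + 1) (by omega)
  constructor
  · calc _ < 6 * r (n - 1) / ‖z‖ :=
          sum_log_lt_of_two_mul_le hpos hdouble_le (by omega) (by linarith)
      _ < 3 * r (n - 1) / (2 * r n) := by
          rw [div_lt_div_iff₀ hz0 (by positivity)]
          nlinarith [hpos (n - 1) (by omega)]
  · calc _ ≤ 6 * ‖z‖ / r (n + 2) :=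
          tsum_log_le_of_two_mul_le (fun k hk => hpos k (by omega))
            (fun k hk => hdouble_le k (by omega)) hz0 (by linarith)
      _ < 3 * r (n + 1) / (2 * r (n + 2)) := by
          rw [div_lt_div_iff₀ hrn2 (by positivity)]
          nlinarith
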